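/- Under the standing setup, the first standard basis vector satisfies: v_1 = 2e_0 − e_1 if k_1 > 1, and v_1 = e_0 − e_1 if k_1 = 1. Moreover, if x_0 = e_0 − e_{k_1} − e_{k_2} + e_{k_3}, then necessarily v_1 = 2e_0 − e_1 (so k_1 > 1). -/

import Mathlib

namespace Prism

/-- Gram matrix of a C-type lattice with parameters `a 1, …, a n` (vertices `x_0, …, x_n`). -/
def CGram (n : ℕ) (a : ℕ → ℤ) : Fin (n + 1) → Fin (n + 1) → ℤ := fun i j =>
  if (i : ℕ) = (j : ℕ) then (if (i : ℕ) = 0 then 4 else a (i : ℕ))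
  else if ((i : ℕ) = 0 ∧ (j : ℕ) = 1) ∨ ((i : ℕ) = 1 ∧ (j : ℕ) = 0) then -2
  else if (i : ℕ) + 1 = (j : ℕ) ∨ (j : ℕ) + 1 = (i : ℕ) then -1
  else 0

/-- The symmetric bilinear form of a C-type lattice. -/
def CForm (n : ℕ) (a : ℕ → ℤ) (v w : Fin (n + 1) → ℤ) : ℤ :=
  ∑ i : Fin (n + 1), ∑ j : Fin (n + 1), v i * CGram n a i j * w j

/-- Conditions on the parameters of a C-type lattice: `n ≥ 1`, all `a_i ≥ 2`, `a_1 ≥ 3`. -/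
def CTypeParams (n : ℕ) (a : ℕ → ℤ) : Prop :=
  1 ≤ n ∧ (∀ i, 1 ≤ i → i ≤ n → 2 ≤ a i) ∧ 3 ≤ a 1

/-- Numerator/denominator pair of the Hirzebruch–Jung continued fraction `[a_1, …, a_k]⁻`. -/
def hjPair : List ℤ → ℤ × ℤ
  | [] => (1, 0)
  | x :: l => (x * (hjPair l).1 - (hjPair l).2, (hjPair l).1)

/-- `a 1, …, a n` are the coefficients of the HJ expansion of `(2q-p)/(q-p)`, all `≥ 2`
(`a_1 ≥ 3` being forced since `q > p`); i.e. the data defining the lattice `C(p,q)`. -/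
def IsCpq (p q : ℤ) (n : ℕ) (a : ℕ → ℤ) : Prop :=
  CTypeParams n a ∧ hjPair ((List.range' 1 n).map fun i => a i) = (2 * q - p, q - p)

/-- Standard dot product on `ℤ^m`. -/
def dotF {m : ℕ} (v w : Fin m → ℤ) : ℤ := ∑ i, v i * w i

/-- Orthogonal complement of `σ` in `ℤ^m`. -/
def perp {m : ℕ} (σ : Fin m → ℤ) : Submodule ℤ (Fin m → ℤ) where
  carrier := {v | dotF v σ = 0}
  add_mem' := by
    intro a b ha hb
    simp only [Set.mem_setOf_eq, dotF, Pi.add_apply, add_mul, Finset.sum_add_distrib] at *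
    omega
  zero_mem' := by simp [dotF]
  smul_mem' := by
    intro c v hv
    simp only [Set.mem_setOf_eq, dotF, Pi.smul_apply, smul_eq_mul, mul_assoc] at *
    rw [← Finset.mul_sum, hv, mul_zero]

/-- Changemaker vector in `ℤ^m`. -/
def IsChangemaker (m : ℕ) (σ : Fin m → ℤ) : Prop :=
  Monotone σ ∧ (∀ i, 0 ≤ σ i) ∧
    ∀ k : ℤ, 0 ≤ k → k ≤ ∑ i, σ i → ∃ S : Finset (Fin m), k = ∑ i ∈ S, σ i

/-- The interval `x_a + x_{a+1} + ⋯ + x_b` in a C-type lattice of rank `n+1`. -/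
def intVec (n : ℕ) (a b : ℕ) : Fin (n + 1) → ℤ := fun i =>
  if a ≤ (i : ℕ) ∧ (i : ℕ) ≤ b then 1 else 0

/-- Breakability with respect to the C-type form. -/
def CBreakable (n : ℕ) (a : ℕ → ℤ) (ℓ : Fin (n + 1) → ℤ) : Prop :=
  ∃ x y : Fin (n + 1) → ℤ, ℓ = x + y ∧ 3 ≤ CForm n a x x ∧ 3 ≤ CForm n a y y ∧
    CForm n a x y = -1

/-- Breakability inside the lattice `(σ)^⊥ ⊆ ℤ^m`. -/
def PerpBreakable {m : ℕ} (σ : Fin m → ℤ) (ℓ : Fin m → ℤ) : Prop :=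
  ∃ x y : Fin m → ℤ, x ∈ perp σ ∧ y ∈ perp σ ∧ ℓ = x + y ∧
    3 ≤ dotF x x ∧ 3 ≤ dotF y y ∧ dotF x y = -1

/-- The number `δ([I],[J])` of dangling edges for intervals `[a,b]` and `[c,d]`,
counted with multiplicity (the edge `x_0x_1` is doubled). -/
def deltaCount (n a b c d : ℕ) : ℤ :=
  ∑ k ∈ Finset.range n,
    if (((a ≤ k ∧ k ≤ b) ∧ (c ≤ k + 1 ∧ k + 1 ≤ d)) ∨
          ((c ≤ k ∧ k ≤ d) ∧ (a ≤ k + 1 ∧ k + 1 ≤ b))) ∧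
        (¬((a ≤ k ∧ k ≤ b) ∧ (c ≤ k ∧ k ≤ d)) ∨
          ¬((a ≤ k + 1 ∧ k + 1 ≤ b) ∧ (c ≤ k + 1 ∧ k + 1 ≤ d)))
    then (if k = 0 then 2 else 1) else 0

/-- `v_j` is tight: `σ_j = 1 + σ_0 + ⋯ + σ_{j-1}`. -/
def IsTight {m : ℕ} (σ : Fin m → ℤ) (j : Fin m) : Prop :=
  σ j = 1 + ∑ i ∈ Finset.Iio j, σ i

/-- The vector `2e_0 + e_1 + ⋯ + e_{j-1} - e_j`. -/
def tightVec (m : ℕ) (j : Fin m) : Fin m → ℤ := fun i =>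
  if i = j then -1 else if i < j then (if (i : ℕ) = 0 then 2 else 1) else 0

/-- `A ⊆ {0,…,j-1}` with `σ_j = ∑_{i ∈ A} σ_i`, maximizing `∑_{i ∈ A} 2^i`. -/
def MaxSubsetRep {m : ℕ} (σ : Fin m → ℤ) (j : Fin m) (A : Finset (Fin m)) : Prop :=
  A ⊆ Finset.Iio j ∧ σ j = ∑ i ∈ A, σ i ∧
    ∀ B ⊆ Finset.Iio j, σ j = ∑ i ∈ B, σ i →
      ∑ i ∈ B, 2 ^ (i : ℕ) ≤ ∑ i ∈ A, 2 ^ (i : ℕ)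

/-- The vector `∑_{i ∈ A} e_i - e_j`. -/
def subsetVec (m : ℕ) (A : Finset (Fin m)) (j : Fin m) : Fin m → ℤ := fun i =>
  if i = j then -1 else if i ∈ A then 1 else 0

/-- `v` is the standard basis vector `v_j` of the changemaker lattice `(σ)^⊥`. -/
def IsStdBasisVec {m : ℕ} (σ : Fin m → ℤ) (j : Fin m) (v : Fin m → ℤ) : Prop :=
  (IsTight σ j ∧ v = tightVec m j) ∨
    (¬IsTight σ j ∧ ∃ A : Finset (Fin m), MaxSubsetRep σ j A ∧ v = subsetVec m A j)

/-- The subset `A` has a gappy index for `v_j`: some `i ∈ A` with `i < j - 1`, `i + 1 ∉ A`. -/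
def IsGappyAt {m : ℕ} (A : Finset (Fin m)) (j : Fin m) : Prop :=
  ∃ i ∈ A, (i : ℕ) + 1 < (j : ℕ) ∧ ∀ i' ∈ A, (i' : ℕ) ≠ (i : ℕ) + 1

/-- The reflection about `x_0^⊥` (using that `⟨x_0, v⟩` is always even and `⟨x_0,x_0⟩ = 4`). -/
def cRefl (n : ℕ) (a : ℕ → ℤ) (v : Fin (n + 1) → ℤ) : Fin (n + 1) → ℤ :=
  v - (CForm n a (Pi.single 0 1) v / 2) • Pi.single 0 1

/-!
Every vector `u` of the C-type lattice satisfies `⟨x_0, u⟩ = 2 (2u_0 - u_1)`, which is even,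
while `⟨x_0, e_0⟩ = 1`; so `e_0 ∉ (σ)^⊥`, whence `σ_0 = 1` and `σ_1 ∈ {1, 2}` by the changemaker
condition. If `σ_1 = 2`, then `v_1 = 2e_0 - e_1` is tight and the parity of
`⟨x_0, v_1⟩ = 2 - ⟨x_0, e_1⟩` says that `e_1` does not occur in `x_0`, i.e. `k_1 > 1`. If
`σ_1 = 1`, then `v_1 = e_0 - e_1` and parity forces `k_1 = 1`; with the signs
`x_0 = e_0 - e_1 - e_{k_2} + e_{k_3}` we would get `⟨x_0, v_1⟩ = 2` and `|v_1|^2 = 2`. This is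
impossible: completing squares along the chain `x_1, …, x_n`, using `a_1 ≥ 3` and `a_i ≥ 2`,
shows that a lattice vector with `2u_0 - u_1` odd has norm at least `3`.
-/

end Prism

theorem Int.abs_le_self_sq (x : ℤ) : |x| ≤ x ^ 2 :=
  Int.natCast_natAbs x ▸ Int.natAbs_le_self_sq x

namespace Prism

open Matrix

section Lattice

variable {n : ℕ} {a : ℕ → ℤ}

theorem CForm_single_zero_left (u : Fin (n + 2) → ℤ) :
    CForm (n + 1) a (Pi.single 0 1) u = 2 * (2 * u 0 - u 1) := by
  have hrow : ∀ j : Fin (n + 2), CGram (n + 1) a 0 j =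
      if j = 0 then 4 else if j = 1 then -2 else 0 := by
    intro j
    simp only [CGram, Fin.ext_iff, Fin.val_zero, Fin.val_one]
    grind
  simp only [CForm, Pi.single_apply, ite_mul, one_mul, zero_mul, Finset.sum_ite_irrel,
    Finset.sum_const_zero, Finset.sum_ite_eq', Finset.mem_univ, if_true]
  rw [Fintype.sum_eq_add 0 1 zero_ne_one (fun j hj => by simp [hrow, hj]), hrow, hrow,
    if_pos rfl, if_neg one_ne_zero, if_pos rfl]
  ring

theorem CForm_self_castSucc (u : Fin (n + 3) → ℤ) :
    CForm (n + 2) a u u = CForm (n + 1) a (u ∘ Fin.castSucc) (u ∘ Fin.castSucc)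
      + a (n + 2) * u (Fin.last _) ^ 2 - 2 * u (Fin.last _).castSucc * u (Fin.last _) := by
  have hcast : ∀ i j : Fin (n + 2),
      CGram (n + 2) a i.castSucc j.castSucc = CGram (n + 1) a i j := by
    intro i j
    simp only [CGram, Fin.val_castSucc]
  have hcol : ∀ i : Fin (n + 2), CGram (n + 2) a i.castSucc (Fin.last _) =
      if i = Fin.last _ then -1 else 0 := by
    intro i
    simp only [CGram, Fin.val_castSucc, Fin.val_last, Fin.ext_iff]
    grind
  have hrow : ∀ j : Fin (n + 2), CGram (n + 2) a (Fin.last _) j.castSucc =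
      if j = Fin.last _ then -1 else 0 := by
    intro j
    simp only [CGram, Fin.val_castSucc, Fin.val_last, Fin.ext_iff]
    grind
  have hdiag : CGram (n + 2) a (Fin.last _) (Fin.last _) = a (n + 2) := by
    simp [CGram]
  simp only [CForm, Fin.sum_univ_castSucc (n := n + 2), Finset.sum_add_distrib, hcast, hcol, hrow,
    hdiag, mul_ite, ite_mul, mul_zero, zero_mul, Finset.sum_ite_eq', Finset.mem_univ, if_true,
    Function.comp_apply]
  ring

theorem le_CForm_self (ha₁ : 3 ≤ a 1) :
    ∀ n, (∀ i, 2 ≤ i → i ≤ n + 1 → 2 ≤ a i) → ∀ u : Fin (n + 2) → ℤ,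
      (2 * u 0 - u 1) ^ 2 + u 1 ^ 2 + |u 1 - u (Fin.last _)| + u (Fin.last _) ^ 2 ≤
        CForm (n + 1) a u u
  | 0, _, u => by
    have h : CForm 1 a u u = 4 * u 0 ^ 2 - 4 * u 0 * u 1 + a 1 * u 1 ^ 2 := by
      rw [CForm, Fin.sum_univ_two, Fin.sum_univ_two, Fin.sum_univ_two]
      simp only [CGram, Fin.val_zero, Fin.val_one, if_true, if_false, one_ne_zero, zero_ne_one,
        and_true, or_true, true_or, and_false, or_false]
      ring
    rw [h, show Fin.last 1 = 1 from rfl, sub_self, abs_zero]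
    nlinarith [sq_nonneg (u 1)]
  | n + 1, ha, u => by
    have ih := le_CForm_self ha₁ n (fun i hi hin => ha i hi (by omega)) (u ∘ Fin.castSucc)
    simp only [Function.comp_apply, Fin.castSucc_zero, Fin.castSucc_one] at ih
    rw [CForm_self_castSucc]
    set p := u (Fin.last _).castSucc
    set q := u (Fin.last _)
    have hq : 2 ≤ a (n + 2) := ha (n + 2) le_add_self le_rfl
    have htri : |u 1 - q| ≤ |u 1 - p| + (p - q) ^ 2 :=
      (abs_sub_le _ p _).trans (by gcongr; exact Int.abs_le_self_sq _)
    nlinarith [sq_nonneg q]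

theorem three_le_CForm_self_of_odd (ha₁ : 3 ≤ a 1) (ha : ∀ i, 2 ≤ i → i ≤ n + 1 → 2 ≤ a i)
    {u : Fin (n + 2) → ℤ} (hu : Odd (2 * u 0 - u 1)) : 3 ≤ CForm (n + 1) a u u := by
  have h₀ : 2 * u 0 - u 1 ≠ 0 := by rintro h; simp [h] at hu
  have h₁ : u 1 ≠ 0 := by
    rintro h
    rw [h, sub_zero] at hu
    exact Int.not_even_iff_odd.mpr hu (even_two_mul _)
  set w := u (Fin.last _)
  have hlast : |u 1| ≤ |u 1 - w| + w ^ 2 :=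
    calc |u 1| = |(u 1 - w) + w| := by rw [sub_add_cancel]
      _ ≤ |u 1 - w| + |w| := abs_add_le _ _
      _ ≤ |u 1 - w| + w ^ 2 := by gcongr; exact Int.abs_le_self_sq w
  nlinarith [le_CForm_self ha₁ n ha u, Int.one_le_abs h₁, Int.one_le_abs h₀, sq_abs (u 1),
    sq_abs (2 * u 0 - u 1)]

end Lattice

theorem dotF_eq_dotProduct {m : ℕ} (v w : Fin m → ℤ) : dotF v w = v ⬝ᵥ w := rfl

theorem mem_perp {m : ℕ} {σ w : Fin m → ℤ} : w ∈ perp σ ↔ w ⬝ᵥ σ = 0 := Iff.rfl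

theorem dotProduct_single_sub_single {m : ℕ} (w : Fin m → ℤ) (i j : Fin m) :
    w ⬝ᵥ (Pi.single i 1 - Pi.single j 1) = w i - w j := by
  simp [dotProduct_sub]

theorem dotProduct_two_smul_single_sub_single {m : ℕ} (w : Fin m → ℤ) (i j : Fin m) :
    w ⬝ᵥ ((2 : ℤ) • Pi.single i 1 - Pi.single j 1) = 2 * w i - w j := by
  rw [dotProduct_sub, dotProduct_smul, dotProduct_single, dotProduct_single, smul_eq_mul, mul_one,
    mul_one]

section Isometry

variable {n : ℕ} {a : ℕ → ℤ} {m : ℕ} {σ : Fin m → ℤ} (φ : (Fin (n + 2) → ℤ) ≃ₗ[ℤ] perp σ)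

theorem exists_eq_coe_of_mem_perp {w : Fin m → ℤ} (hw : w ∈ perp σ) :
    ∃ u, (φ u : Fin m → ℤ) = w :=
  ⟨φ.symm ⟨w, hw⟩, by simp⟩

theorem even_dotF_of_mem_perp
    (hφ : ∀ v w, CForm (n + 1) a v w = dotF (φ v : Fin m → ℤ) (φ w))
    {w : Fin m → ℤ} (hw : w ∈ perp σ) : Even (dotF (φ (Pi.single 0 1) : Fin m → ℤ) w) := by
  obtain ⟨u, rfl⟩ := exists_eq_coe_of_mem_perp φ hw
  rw [← hφ, CForm_single_zero_left]
  exact even_two_mul _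

theorem three_le_dotF_self_of_dotF_eq_two (ha₁ : 3 ≤ a 1)
    (ha : ∀ i, 2 ≤ i → i ≤ n + 1 → 2 ≤ a i)
    (hφ : ∀ v w, CForm (n + 1) a v w = dotF (φ v : Fin m → ℤ) (φ w))
    {w : Fin m → ℤ} (hw : w ∈ perp σ) (h : dotF (φ (Pi.single 0 1) : Fin m → ℤ) w = 2) :
    3 ≤ dotF w w := by
  obtain ⟨u, rfl⟩ := exists_eq_coe_of_mem_perp φ hw
  rw [← hφ, CForm_single_zero_left] at h
  rw [← hφ]
  exact three_le_CForm_self_of_odd ha₁ ha ⟨0, by omega⟩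

end Isometry

theorem IsChangemaker.le_one_add_sum_Iio {m : ℕ} {σ : Fin m → ℤ} (hσ : IsChangemaker m σ)
    (j : Fin m) : σ j ≤ 1 + ∑ i ∈ Finset.Iio j, σ i := by
  obtain ⟨hmono, hnn, hrep⟩ := hσ
  by_contra! hj
  have hsum : σ j ≤ ∑ i, σ i := Finset.single_le_sum (fun i _ => hnn i) (Finset.mem_univ j)
  obtain ⟨S, hS⟩ := hrep (1 + ∑ i ∈ Finset.Iio j, σ i)
    (by linarith [Finset.sum_nonneg fun i (_ : i ∈ Finset.Iio j) => hnn i]) (by omega)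
  by_cases hSj : S ⊆ Finset.Iio j
  · have := Finset.sum_le_sum_of_subset_of_nonneg hSj fun i _ _ => hnn i
    omega
  · obtain ⟨i, hiS, hij⟩ := Finset.not_subset.mp hSj
    have hji : σ j ≤ σ i := hmono (by simpa using hij)
    have := Finset.single_le_sum (fun i _ => hnn i) hiS
    omega

section FirstBasisVector

variable {n : ℕ} {σ v : Fin (n + 2) → ℤ}

theorem Iio_one_eq_singleton_zero : Finset.Iio (1 : Fin (n + 2)) = {0} := by
  ext i
  simp [Fin.lt_one_iff]

theorem isTight_one_iff : IsTight σ 1 ↔ σ 1 = 1 + σ 0 := by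
  simp [IsTight, Iio_one_eq_singleton_zero]

theorem IsChangemaker.apply_zero_eq_one (hσ : IsChangemaker (n + 2) σ) (h₀ : σ 0 ≠ 0) :
    σ 0 = 1 := by
  have := hσ.le_one_add_sum_Iio 0
  rw [Finset.Iio_eq_empty.mpr fun i _ => Fin.zero_le i, Finset.sum_empty] at this
  have := hσ.2.1 0
  omega

theorem IsChangemaker.apply_one_eq (hσ : IsChangemaker (n + 2) σ) :
    σ 1 = σ 0 ∨ σ 1 = 1 + σ 0 := by
  have := hσ.le_one_add_sum_Iio 1
  rw [Iio_one_eq_singleton_zero, Finset.sum_singleton] at this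
  have := hσ.1 (Fin.zero_le 1)
  omega

theorem tightVec_one : tightVec (n + 2) 1 = (2 : ℤ) • Pi.single 0 1 - Pi.single 1 1 := by
  funext i
  simp only [tightVec, Pi.sub_apply, Pi.smul_apply, Pi.single_apply, smul_eq_mul, Fin.lt_def,
    Fin.ext_iff, Fin.val_zero, Fin.val_one]
  split_ifs <;> omega

theorem subsetVec_zero_one : subsetVec (n + 2) {0} 1 = Pi.single 0 1 - Pi.single 1 1 := by
  funext i
  simp only [subsetVec, Pi.sub_apply, Pi.single_apply, Finset.mem_singleton, Fin.ext_iff,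
    Fin.val_zero, Fin.val_one]
  split_ifs <;> omega

theorem IsStdBasisVec.one_eq_of_isTight (hv : IsStdBasisVec σ 1 v) (h : IsTight σ 1) :
    v = (2 : ℤ) • Pi.single 0 1 - Pi.single 1 1 := by
  rcases hv with ⟨-, rfl⟩ | ⟨hnt, -⟩
  · exact tightVec_one
  · exact absurd h hnt

theorem IsStdBasisVec.one_eq_of_not_isTight (hv : IsStdBasisVec σ 1 v) (h : ¬IsTight σ 1)
    (hσ : σ 1 ≠ 0) : v = Pi.single 0 1 - Pi.single 1 1 := by
  rcases hv with ⟨ht, -⟩ | ⟨-, A, ⟨hA, hσA, -⟩, rfl⟩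
  · exact absurd ht h
  · rw [Iio_one_eq_singleton_zero, Finset.subset_singleton_iff] at hA
    rcases hA with rfl | rfl
    · exact absurd (by simpa using hσA) hσ
    · exact subsetVec_zero_one

theorem IsStdBasisVec.one_cases {σ v X : Fin (n + 2) → ℤ} (hσ : IsChangemaker (n + 2) σ)
    (hv : IsStdBasisVec σ 1 v) (hpair : ∀ w ∈ perp σ, Even (dotF X w)) (hX₀ : X 0 = 1) :
    (v = (2 : ℤ) • Pi.single 0 1 - Pi.single 1 1 ∧ Even (X 1)) ∨
      (v = Pi.single 0 1 - Pi.single 1 1 ∧ v ∈ perp σ ∧ Odd (X 1)) := by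
  have hσ₀ : σ 0 = 1 := hσ.apply_zero_eq_one fun h₀ => by
    simpa [dotF_eq_dotProduct, hX₀] using hpair (Pi.single 0 1) (by simp [mem_perp, h₀])
  rcases hσ.apply_one_eq with hσ₁ | hσ₁
  · have hv := hv.one_eq_of_not_isTight (by rw [isTight_one_iff]; omega) (by omega)
    have hmem : v ∈ perp σ := by
      rw [mem_perp, dotProduct_comm, hv, dotProduct_single_sub_single, hσ₁, sub_self]
    obtain ⟨s, hs⟩ := hpair v hmem
    rw [dotF_eq_dotProduct, hv, dotProduct_single_sub_single, hX₀] at hs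
    exact Or.inr ⟨hv, hmem, -s, by omega⟩
  · have hv := hv.one_eq_of_isTight (isTight_one_iff.2 hσ₁)
    have hmem : v ∈ perp σ := by
      rw [mem_perp, dotProduct_comm, hv, dotProduct_two_smul_single_sub_single, hσ₁, hσ₀]
      norm_num
    obtain ⟨s, hs⟩ := hpair v hmem
    rw [dotF_eq_dotProduct, hv, dotProduct_two_smul_single_sub_single, hX₀] at hs
    exact Or.inl ⟨hv, 1 - s, by omega⟩

end FirstBasisVector

section VertexZero

variable {m : ℕ} {k₁ k₂ k₃ : Fin (m + 2)}

theorem single_one_apply (b i : Fin m) :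
    (Pi.single b 1 : Fin m → ℤ) i = if (i : ℕ) = b then 1 else 0 := by
  simp [Pi.single_apply, Fin.ext_iff]

theorem apply_zero_eq_one_and_odd_apply_one_iff (hk₁ : 0 < k₁) (hk₁₂ : k₁ < k₂) (hk₂₃ : k₂ < k₃)
    {X : Fin (m + 2) → ℤ}
    (hX : X = Pi.single 0 1 + Pi.single k₁ 1 + Pi.single k₂ 1 - Pi.single k₃ 1 ∨
      X = Pi.single 0 1 - Pi.single k₁ 1 - Pi.single k₂ 1 + Pi.single k₃ 1) :
    X 0 = 1 ∧ (Odd (X 1) ↔ (k₁ : ℕ) = 1) := by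
  have hk : 0 < (k₁ : ℕ) ∧ (k₁ : ℕ) < k₂ ∧ (k₂ : ℕ) < k₃ := ⟨hk₁, hk₁₂, hk₂₃⟩
  rcases hX with rfl | rfl <;>
    simp only [Pi.add_apply, Pi.sub_apply, single_one_apply, Fin.val_zero, Fin.val_one] <;>
    grind

theorem sub_single_apply_one (hk₁ : (k₁ : ℕ) = 1) (hk₁₂ : k₁ < k₂) (hk₂₃ : k₂ < k₃) :
    (Pi.single 0 1 - Pi.single k₁ 1 - Pi.single k₂ 1 + Pi.single k₃ 1 : Fin (m + 2) → ℤ) 1 =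
      -1 := by
  have hk : (k₁ : ℕ) < k₂ ∧ (k₂ : ℕ) < k₃ := ⟨hk₁₂, hk₂₃⟩
  simp only [Pi.add_apply, Pi.sub_apply, single_one_apply, Fin.val_zero, Fin.val_one]
  grind

end VertexZero

/-- Corollary 4.15: `v_1 = 2e_0 - e_1` if `k_1 > 1` and
`v_1 = e_0 - e_1` if `k_1 = 1`; if `x_0 = e_0 - e_{k_1} - e_{k_2} + e_{k_3}` then
necessarily `v_1 = 2e_0 - e_1`. -/
theorem statement10
    (n : ℕ) (aa : ℕ → ℤ) (hC : CTypeParams n aa)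
    (σ : Fin (n + 2) → ℤ) (hσ : IsChangemaker (n + 2) σ)
    (φ : (Fin (n + 1) → ℤ) ≃ₗ[ℤ] perp σ)
    (hφ : ∀ v w : Fin (n + 1) → ℤ,
      CForm n aa v w = dotF (φ v : Fin (n + 2) → ℤ) (φ w : Fin (n + 2) → ℤ))
    (k₁ k₂ k₃ : Fin (n + 2)) (hk₁ : 0 < k₁) (hk₁₂ : k₁ < k₂) (hk₂₃ : k₂ < k₃)
    (hx0 : (φ (Pi.single 0 1) : Fin (n + 2) → ℤ) =
        Pi.single 0 1 + Pi.single k₁ 1 + Pi.single k₂ 1 - Pi.single k₃ 1 ∨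
      (φ (Pi.single 0 1) : Fin (n + 2) → ℤ) =
        Pi.single 0 1 - Pi.single k₁ 1 - Pi.single k₂ 1 + Pi.single k₃ 1)
    (v₁ : Fin (n + 2) → ℤ) (hv₁ : IsStdBasisVec σ 1 v₁) :
    (1 < (k₁ : ℕ) → v₁ = (2 : ℤ) • Pi.single 0 1 - Pi.single 1 1) ∧
    ((k₁ : ℕ) = 1 → v₁ = Pi.single 0 1 - Pi.single 1 1) ∧
    ((φ (Pi.single 0 1) : Fin (n + 2) → ℤ) =
        Pi.single 0 1 - Pi.single k₁ 1 - Pi.single k₂ 1 + Pi.single k₃ 1 →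
      v₁ = (2 : ℤ) • Pi.single 0 1 - Pi.single 1 1) := by
  obtain ⟨hn, ha, ha₁⟩ := hC
  obtain ⟨n, rfl⟩ : ∃ k, n = k + 1 := ⟨n - 1, by omega⟩
  have hpair : ∀ w ∈ perp σ, Even (dotF (φ (Pi.single 0 1) : Fin (n + 1 + 2) → ℤ) w) :=
    fun w => even_dotF_of_mem_perp φ hφ
  have hnorm : ∀ w ∈ perp σ, dotF (φ (Pi.single 0 1) : Fin (n + 1 + 2) → ℤ) w = 2 →
      3 ≤ dotF w w :=
    fun w => three_le_dotF_self_of_dotF_eq_two φ ha₁ (fun i hi => ha i (by omega)) hφ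
  generalize (φ (Pi.single 0 1) : Fin (n + 1 + 2) → ℤ) = X at hx0 hpair hnorm ⊢
  obtain ⟨hX₀, hX₁⟩ := apply_zero_eq_one_and_odd_apply_one_iff hk₁ hk₁₂ hk₂₃ hx0
  rcases hv₁.one_cases hσ hpair hX₀ with ⟨hv, hX₁e⟩ | ⟨hv, hmem, hX₁o⟩
  · exact ⟨fun _ => hv, fun hk => absurd hX₁e (Int.not_even_iff_odd.mpr (hX₁.2 hk)), fun _ => hv⟩
  · have hk := hX₁.1 hX₁o
    refine ⟨fun hk' => by omega, fun _ => hv, fun hminus => absurd (hnorm v₁ hmem ?_) ?_⟩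
    · rw [dotF_eq_dotProduct, hv, dotProduct_single_sub_single, hX₀, hminus,
        sub_single_apply_one hk hk₁₂ hk₂₃]
      norm_num
    · rw [dotF_eq_dotProduct, hv, dotProduct_single_sub_single]
      simp

end Prism
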